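/- Let α > 0 and C > 0. There exists a constant K > 0, depending only on α and C, such that for all x ∈ ℝ and t ≥ 1 with 0 ≤ 1/(12α) − x/t ≤ C·t^{−2/3}, and for every real l ≥ 0 and k = k₂ + l·e^{−iπ/6}, where k₂ = (2/3)·(−1 + √(1 − 12α·x/t)), one has exp(−(3/4)·t·Re(Φ(k) − Φ(−2/3))) ≤ K·exp(−|z|³/6), where z = (1/8)·(3/α²)^{1/3}·(k + 2/3)·t^{1/3}. -/

import Mathlib

/-!
Put `w = k + 2/3 = a + l·e^{-iπ/6}` with `a = (2/3)·√(1 - 12αx/t)`, so that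
`x/t = 1/(12α) - 3a²/(16α)`. Then `Φ(k) - Φ(-2/3) = i(w³ - 3a²w)/(64α²)`, whose real part
along the ray is `(3√3·a·l² + 2l³)/(128α²)`. Since `|z|³ ≤ 3t(a + l)³/(512α²)` and
`(a + l)³ ≤ 4a³ + 6(3√3·a·l² + 2l³)`, the decay coming from the phase beats `exp(-|z|³/6)` up to
the factor `exp(t·a³/(256α²))`, and `t·a³` is bounded because `a² ≤ (16/3)·α·C·t^{-2/3}`.
-/

open Complex

/-- The phase function Φ(k) = (i/(4α))·[(x/t)·k + (1/(16α))·(k³ + 2k²)]. -/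
noncomputable def Phi (α x t : ℝ) (k : ℂ) : ℂ :=
  (Complex.I / (4 * (α : ℂ))) *
    (((x / t : ℝ) : ℂ) * k + (1 / (16 * (α : ℂ))) * (k ^ 3 + 2 * k ^ 2))

local notation "ω" => Complex.exp (-(Complex.I * (Real.pi / 6)))

theorem Phi_sub_Phi_neg_two_thirds {α : ℝ} (hα : α ≠ 0) (x t : ℝ) (w : ℂ) :
    Phi α x t (w - 2 / 3) - Phi α x t (-2 / 3) =
      I / (4 * α) * (((x / t - 1 / (12 * α) : ℝ) : ℂ) * w + w ^ 3 / (16 * α)) := by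
  have : (α : ℂ) ≠ 0 := ofReal_ne_zero.mpr hα
  simp only [Phi]
  push_cast
  field_simp
  ring

theorem exp_neg_I_mul_pi_div_six : ω = (√3 / 2 : ℝ) - (1 / 2 : ℝ) * I := by
  rw [show -(I * ((Real.pi : ℂ) / 6)) = ((-(Real.pi / 6) : ℝ) : ℂ) * I by push_cast; ring,
    exp_mul_I, ← ofReal_cos, ← ofReal_sin, Real.cos_neg, Real.sin_neg, Real.cos_pi_div_six,
    Real.sin_pi_div_six]
  push_cast
  ring

theorem im_cube_sub_along_ray (a l : ℝ) :
    ((a + l * ω) ^ 3 - 3 * a ^ 2 * (a + l * ω)).im = -(3 * √3 * a * l ^ 2 + 2 * l ^ 3) / 2 := by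
  have h3 : √3 ^ 2 = 3 := Real.sq_sqrt (by norm_num)
  simp only [exp_neg_I_mul_pi_div_six, pow_succ, pow_zero, one_mul, mul_im, mul_re, sub_im,
    sub_re, add_im, add_re, ofReal_re, ofReal_im, I_re, I_im]
  norm_num
  linear_combination (-(3 : ℝ) / 8 * l ^ 3) * h3

theorem re_Phi_sub_Phi_neg_two_thirds_along_ray {α x t a : ℝ} (hα : α ≠ 0)
    (hxt : x / t = 1 / (12 * α) - 3 * a ^ 2 / (16 * α)) (l : ℝ) :
    (Phi α x t (a + l * ω - 2 / 3) - Phi α x t (-2 / 3)).re =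
      (3 * √3 * a * l ^ 2 + 2 * l ^ 3) / (128 * α ^ 2) := by
  have hα' : (α : ℂ) ≠ 0 := ofReal_ne_zero.mpr hα
  have hcoef : I / (4 * α) * (((x / t - 1 / (12 * α) : ℝ) : ℂ) * (a + l * ω) +
      (a + l * ω) ^ 3 / (16 * α)) =
      ((1 / (64 * α ^ 2) : ℝ) : ℂ) * (I * ((a + l * ω) ^ 3 - 3 * a ^ 2 * (a + l * ω))) := by
    rw [hxt]; push_cast; field_simp; ring
  rw [Phi_sub_Phi_neg_two_thirds hα, hcoef, re_ofReal_mul, I_mul_re, im_cube_sub_along_ray]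
  field_simp
  ring

theorem norm_add_mul_exp_neg_I_mul_pi_div_six_le {a l : ℝ} (ha : 0 ≤ a) (hl : 0 ≤ l) :
    ‖(a : ℂ) + l * ω‖ ≤ a + l := by
  refine (norm_add_le _ _).trans (le_of_eq ?_)
  rw [norm_mul, norm_exp]
  simp [abs_of_nonneg ha, abs_of_nonneg hl]

theorem cube_add_le {a l : ℝ} (ha : 0 ≤ a) (hl : 0 ≤ l) :
    (a + l) ^ 3 ≤ 4 * a ^ 3 + 6 * (3 * √3 * a * l ^ 2 + 2 * l ^ 3) := by
  have hs3 : 1 ≤ √3 := Real.one_le_sqrt.mpr (by norm_num)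
  nlinarith [mul_nonneg ha (sq_nonneg (a - l)), mul_nonneg hl (sq_nonneg (a - l)),
    mul_nonneg (mul_nonneg ha (sq_nonneg l)) (sub_nonneg.mpr hs3), pow_nonneg hl 3,
    mul_nonneg ha (sq_nonneg l), pow_nonneg ha 3]

theorem one_div_three_rpow_pow_three {x : ℝ} (hx : 0 ≤ x) : (x ^ ((1 : ℝ) / 3)) ^ 3 = x := by
  rw [one_div]
  exact_mod_cast Real.rpow_inv_natCast_pow hx (n := 3) (by norm_num)

theorem scale_pow_three {α t : ℝ} (hα : α ≠ 0) (ht : 0 ≤ t) :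
    ((1 : ℝ) / 8 * (3 / α ^ 2) ^ ((1 : ℝ) / 3) * t ^ ((1 : ℝ) / 3)) ^ 3 =
      3 * t / (512 * α ^ 2) := by
  rw [mul_pow, mul_pow, one_div_three_rpow_pow_three (by positivity),
    one_div_three_rpow_pow_three ht]
  field_simp
  ring

theorem mul_pow_three_le_of_sq_le {t a D : ℝ} (ht : 0 < t)
    (h : a ^ 2 ≤ D * t ^ (-(2 : ℝ) / 3)) : t * a ^ 3 ≤ √(D ^ 3) := by
  have htpow : (t ^ (-(2 : ℝ) / 3)) ^ 3 * t ^ 2 = 1 := by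
    rw [← Real.rpow_natCast, ← Real.rpow_mul ht.le, ← Real.rpow_natCast, ← Real.rpow_add ht]
    norm_num
  refine (le_abs_self _).trans (Real.abs_le_sqrt ?_)
  calc (t * a ^ 3) ^ 2 = t ^ 2 * (a ^ 2) ^ 3 := by ring
    _ ≤ t ^ 2 * (D * t ^ (-(2 : ℝ) / 3)) ^ 3 := by gcongr
    _ = D ^ 3 := by linear_combination D ^ 3 * htpow

theorem norm_scale_mul_pow_three_div_six_le {α t a l B : ℝ} (hα : α ≠ 0) (ht : 0 ≤ t)
    (ha : 0 ≤ a) (hl : 0 ≤ l) (hB : t * a ^ 3 ≤ B) :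
    ‖(((1 : ℝ) / 8 * (3 / α ^ 2) ^ ((1 : ℝ) / 3) * t ^ ((1 : ℝ) / 3) : ℝ) : ℂ) *
        (a + l * ω)‖ ^ 3 / 6 ≤
      B / (256 * α ^ 2) + 3 / 4 * t * ((3 * √3 * a * l ^ 2 + 2 * l ^ 3) / (128 * α ^ 2)) := by
  have hc : 0 ≤ (1 : ℝ) / 8 * (3 / α ^ 2) ^ ((1 : ℝ) / 3) * t ^ ((1 : ℝ) / 3) := by positivity
  calc _ = t * ‖(a : ℂ) + l * ω‖ ^ 3 / (1024 * α ^ 2) := by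
        rw [norm_mul, norm_real, Real.norm_of_nonneg hc, mul_pow, scale_pow_three hα ht]
        field_simp
        ring
    _ ≤ t * (4 * a ^ 3 + 6 * (3 * √3 * a * l ^ 2 + 2 * l ^ 3)) / (1024 * α ^ 2) := by
        gcongr
        exact (pow_le_pow_left₀ (norm_nonneg _)
          (norm_add_mul_exp_neg_I_mul_pi_div_six_le ha hl) 3).trans (cube_add_le ha hl)
    _ = (4 * (t * a ^ 3) + 6 * t * (3 * √3 * a * l ^ 2 + 2 * l ^ 3)) / (1024 * α ^ 2) := by ring
    _ ≤ (4 * B + 6 * t * (3 * √3 * a * l ^ 2 + 2 * l ^ 3)) / (1024 * α ^ 2) := by gcongr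
    _ = _ := by field_simp; ring

theorem stmt_8_general (α C : ℝ) (hα : 0 < α) :
    ∃ K : ℝ, 0 < K ∧
      ∀ (x t : ℝ), 1 ≤ t →
        0 ≤ 1 / (12 * α) - x / t → 1 / (12 * α) - x / t ≤ C * t ^ (-(2:ℝ)/3) →
        ∀ l : ℝ, 0 ≤ l →
          ∀ k : ℂ, k = (((2/3) * (-1 + Real.sqrt (1 - 12 * α * (x / t))) : ℝ) : ℂ) +
              (l : ℂ) * Complex.exp (-(Complex.I * (Real.pi / 6))) →
            Real.exp (-(3/4) * t * (Phi α x t k - Phi α x t (-2/3)).re) ≤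
              K * Real.exp (-‖
                ((((1:ℝ)/8 * (3 / α ^ 2) ^ ((1:ℝ)/3) * t ^ ((1:ℝ)/3) : ℝ) : ℂ) *
                  (k + 2/3))‖ ^ 3 / 6) := by
  refine ⟨Real.exp (√((16 / 3 * α * C) ^ 3) / (256 * α ^ 2)), Real.exp_pos _, ?_⟩
  rintro x t ht hgap hgapC l hl k rfl
  have ht0 : 0 < t := by linarith
  have hgap' : 1 - 12 * α * (x / t) = 12 * α * (1 / (12 * α) - x / t) := by field_simp
  set a := 2 / 3 * √(1 - 12 * α * (x / t)) with ha_def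
  have ha : 0 ≤ a := by positivity
  have ha2 : a ^ 2 = 16 / 3 * α * (1 / (12 * α) - x / t) := by
    rw [ha_def, mul_pow, Real.sq_sqrt (by rw [hgap']; positivity), hgap']
    ring
  have hxt : x / t = 1 / (12 * α) - 3 * a ^ 2 / (16 * α) := by rw [ha2]; field_simp; ring
  have hta : t * a ^ 3 ≤ √((16 / 3 * α * C) ^ 3) := by
    refine mul_pow_three_le_of_sq_le ht0 ?_
    calc a ^ 2 ≤ 16 / 3 * α * (C * t ^ (-(2 : ℝ) / 3)) := by rw [ha2]; gcongr
      _ = _ := by ring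
  have hk : (((2 / 3) * (-1 + √(1 - 12 * α * (x / t))) : ℝ) : ℂ) + l * ω = a + l * ω - 2 / 3 := by
    rw [ha_def]; push_cast; ring
  rw [hk, sub_add_cancel, re_Phi_sub_Phi_neg_two_thirds_along_ray hα.ne' hxt, ← Real.exp_add]
  refine Real.exp_le_exp.mpr ?_
  linear_combination norm_scale_mul_pow_three_div_six_le hα.ne' ht0.le ha hl hta

theorem stmt_8 (α C : ℝ) (hα : 0 < α) (hC : 0 < C) :
    ∃ K : ℝ, 0 < K ∧
      ∀ (x t : ℝ), 1 ≤ t →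
        0 ≤ 1 / (12 * α) - x / t → 1 / (12 * α) - x / t ≤ C * t ^ (-(2:ℝ)/3) →
        ∀ l : ℝ, 0 ≤ l →
          ∀ k : ℂ, k = (((2/3) * (-1 + Real.sqrt (1 - 12 * α * (x / t))) : ℝ) : ℂ) +
              (l : ℂ) * Complex.exp (-(Complex.I * (Real.pi / 6))) →
            Real.exp (-(3/4) * t * (Phi α x t k - Phi α x t (-2/3)).re) ≤
              K * Real.exp (-‖
                ((((1:ℝ)/8 * (3 / α ^ 2) ^ ((1:ℝ)/3) * t ^ ((1:ℝ)/3) : ℝ) : ℂ) *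
                  (k + 2/3))‖ ^ 3 / 6) :=
  stmt_8_general α C hα
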